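/- arXiv:1903.01165 — 4 statements merged into one kernel-verified Lean document; each statement's English description precedes it below -/
import Mathlib

section
/- Let G be a finite simple graph with vertex set V, x ∈ V, and j ∈ V with j ≠ x. Regard Sh[v̄_{NC1}](x) as a function of the reliability vector p. (i) If the graph distance between x and j is 1 or 2, and p_i ∈ (0,1] for all i ≠ j, then p_j ↦ Sh[v̄_{NC1}](x) is strictly decreasing on [0,1]. (ii) If the graph distance between x and j is greater than 2, then Sh[v̄_{NC1}](x) does not depend on p_j. -/
open Finset

attribute [local instance] Classical.propDecidable

noncomputable section

/-- `Π_{T,S}(p) = (∏_{i∈T} p i) * (∏_{i∈S\T} (1 - p i))`. -/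
def prodPi {α : Type*} (p : α → ℝ) (T S : Finset α) : ℝ :=
  (∏ i ∈ T, p i) * (∏ i ∈ S \ T, (1 - p i))

/-- Reliability extension of a TU-game. -/
def relExt {α : Type*} (p : α → ℝ) (v : Finset α → ℝ) (S : Finset α) : ℝ :=
  ∑ T ∈ S.powerset, v T * prodPi p T S

/-- The set of players preceding `x` in the ordering `σ`. -/
def precedingSet {α : Type*} [Fintype α] (σ : Fin (Fintype.card α) ≃ α) (x : α) : Finset α :=
  Finset.univ.filter fun y => σ.symm y < σ.symm x

/-- The Shapley value of player `x` in the TU-game `v`. -/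
def shapley {α : Type*} [Fintype α] (v : Finset α → ℝ) (x : α) : ℝ :=
  (1 / ((Fintype.card α).factorial : ℝ)) *
    ∑ σ : Fin (Fintype.card α) ≃ α,
      (v (insert x (precedingSet σ x)) - v (precedingSet σ x))

/-- The (open) neighborhood of `v` as a finset. -/
def nbhd {α : Type*} [Fintype α] (G : SimpleGraph α) (v : α) : Finset α :=
  Finset.univ.filter fun y => G.Adj v y

/-- `N̂(v) = {v} ∪ N(v)`. -/
def closedNbhd {α : Type*} [Fintype α] (G : SimpleGraph α) (v : α) : Finset α :=
  insert v (nbhd G v)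

/-- `δ(S)`: vertices outside `S` having a neighbor in `S`. -/
def extBoundary {α : Type*} [Fintype α] (G : SimpleGraph α) (S : Finset α) : Finset α :=
  Finset.univ.filter fun y => y ∉ S ∧ ∃ x ∈ S, G.Adj x y

/-- The network centrality game `Γ_{NC1}`: `v(S) = |S ∪ δ(S)|`. -/
def vNC1 {α : Type*} [Fintype α] (G : SimpleGraph α) (S : Finset α) : ℝ :=
  ((S ∪ extBoundary G S).card : ℝ)

/-! Expanding `v̄_{NC1}(S)` as the sum over vertices `w` of the probability that a reliable player
of `S` lies in `N̂(w)`, the marginal contribution of `x ∉ S` becomes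
`p_x ∑_{w ∈ N̂(x)} ∏_{i ∈ S ∩ N̂(w)} (1 - p_i)`. Each product is affine in `p_j` and depends on it
only when `j ∈ N̂(w)` for some `w ∈ N̂(x)`, i.e. when `d(x, j) ≤ 2`; so the Shapley value of `x` is
affine in `p_j`, with slope zero when `d(x, j) > 2`, and strictly negative otherwise because the
orderings starting with `j, x` contribute `-p_x < 0` to it. -/

section ReliabilityExtension

variable {α : Type*}

lemma sum_prodPi_powerset (p : α → ℝ) (S : Finset α) :
    ∑ T ∈ S.powerset, prodPi p T S = 1 := by
  simp [prodPi, ← Finset.prod_add]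

lemma sum_prodPi_powerset_filter_disjoint (p : α → ℝ) (S A : Finset α) :
    ∑ T ∈ S.powerset with Disjoint T A, prodPi p T S = ∏ i ∈ S ∩ A, (1 - p i) := by
  -- expand `∏ i ∈ S, (p' i + (1 - p i))` with `p'` vanishing on `A`: only the `T` disjoint from `A`
  -- contribute
  have key := Finset.prod_add (fun i => if i ∉ A then p i else 0) (fun i => 1 - p i) S
  simp only [ite_add, zero_add, add_sub_cancel, Finset.prod_ite_zero] at key
  simp only [ite_not, Finset.prod_ite_mem] at key
  rw [key, Finset.sum_filter]
  refine Finset.sum_congr rfl fun T _ => ?_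
  simp [prodPi, Finset.disjoint_left]

lemma relExt_indicator_not_disjoint (p : α → ℝ) (A S : Finset α) :
    relExt p (fun T => if Disjoint T A then 0 else 1) S = 1 - ∏ i ∈ S ∩ A, (1 - p i) := by
  rw [relExt, eq_sub_iff_add_eq, ← sum_prodPi_powerset_filter_disjoint, Finset.sum_filter,
    ← Finset.sum_add_distrib]
  convert sum_prodPi_powerset p S using 2 with T
  split_ifs <;> ring

lemma relExt_sum {ι : Type*} (p : α → ℝ) (s : Finset ι) (v : ι → Finset α → ℝ) (S : Finset α) :
    relExt p (fun T => ∑ w ∈ s, v w T) S = ∑ w ∈ s, relExt p (v w) S := by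
  simp only [relExt, Finset.sum_mul]
  exact Finset.sum_comm

lemma sub_prod_insert_inter (p : α → ℝ) {x : α} {S : Finset α} (hx : x ∉ S)
    (A : Finset α) :
    ∏ i ∈ S ∩ A, (1 - p i) - ∏ i ∈ insert x S ∩ A, (1 - p i)
      = if x ∈ A then p x * ∏ i ∈ S ∩ A, (1 - p i) else 0 := by
  split_ifs with hxA
  · rw [Finset.insert_inter_of_mem hxA, Finset.prod_insert fun h => hx (Finset.mem_inter.1 h).1]
    ring
  · rw [Finset.insert_inter_of_notMem hxA, sub_self]

end ReliabilityExtension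

lemma prod_sub_prod_of_forall_ne_eq {ι R : Type*} [CommRing R] [DecidableEq ι] {f g : ι → R}
    {j : ι} (h : ∀ i ≠ j, f i = g i) (M : Finset ι) :
    ∏ i ∈ M, f i - ∏ i ∈ M, g i = (f j - g j) * if j ∈ M then ∏ i ∈ M.erase j, g i else 0 := by
  split_ifs with hj
  · rw [← Finset.mul_prod_erase M f hj, ← Finset.mul_prod_erase M g hj,
      Finset.prod_congr rfl fun i hi => h i (Finset.ne_of_mem_erase hi)]
    ring
  · rw [Finset.prod_congr rfl fun i hi => h i (ne_of_mem_of_not_mem hi hj), sub_self, mul_zero]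

lemma exists_equiv_apply_eq_apply_eq {β γ : Type*} (e : β ≃ γ) {i k : β} (hik : i ≠ k) {a b : γ}
    (hab : a ≠ b) : ∃ σ : β ≃ γ, σ i = a ∧ σ k = b := by
  set τ := e.trans (Equiv.swap (e i) a)
  have hτ : τ i = a := by simp [τ]
  have hτb : τ.symm b ≠ i := fun h => hab (by rw [← hτ, ← h, τ.apply_symm_apply])
  refine ⟨(Equiv.swap k (τ.symm b)).trans τ, ?_, by simp⟩
  simp [Equiv.swap_apply_of_ne_of_ne hik hτb.symm, hτ]

section NetworkCentrality

variable {α : Type*} [Fintype α] (G : SimpleGraph α)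

lemma mem_closedNbhd {v y : α} : y ∈ closedNbhd G v ↔ y = v ∨ G.Adj v y := by
  simp [closedNbhd, nbhd]

lemma mem_closedNbhd_comm {v w : α} : v ∈ closedNbhd G w ↔ w ∈ closedNbhd G v := by
  rw [mem_closedNbhd, mem_closedNbhd, eq_comm, G.adj_comm]

lemma mem_union_extBoundary_iff (S : Finset α) (w : α) :
    w ∈ S ∪ extBoundary G S ↔ ¬ Disjoint S (closedNbhd G w) := by
  simp only [Finset.mem_union, extBoundary, Finset.mem_filter, Finset.mem_univ, true_and,
    Finset.not_disjoint_iff, mem_closedNbhd]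
  constructor
  · rintro (hw | ⟨-, y, hy, hyw⟩)
    · exact ⟨w, hw, Or.inl rfl⟩
    · exact ⟨y, hy, Or.inr hyw.symm⟩
  · rintro ⟨y, hy, rfl | hwy⟩
    · exact Or.inl hy
    · by_cases hw : w ∈ S
      · exact Or.inl hw
      · exact Or.inr ⟨hw, y, hy, hwy.symm⟩

lemma vNC1_eq_sum :
    vNC1 G = fun S => ∑ w, if Disjoint S (closedNbhd G w) then 0 else 1 := by
  ext S
  have hcover : S ∪ extBoundary G S = ({w | ¬ Disjoint S (closedNbhd G w)} : Finset α) := by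
    ext w
    rw [mem_union_extBoundary_iff, Finset.mem_filter_univ]
  rw [vNC1, hcover, ← Finset.sum_boole]
  simp only [ite_not]

lemma relExt_vNC1 (p : α → ℝ) (S : Finset α) :
    relExt p (vNC1 G) S = ∑ w, (1 - ∏ i ∈ S ∩ closedNbhd G w, (1 - p i)) := by
  simp only [vNC1_eq_sum, relExt_sum, relExt_indicator_not_disjoint]

lemma relExt_vNC1_insert_sub (p : α → ℝ) {x : α} {S : Finset α} (hx : x ∉ S) :
    relExt p (vNC1 G) (insert x S) - relExt p (vNC1 G) S
      = p x * ∑ w ∈ closedNbhd G x, ∏ i ∈ S ∩ closedNbhd G w, (1 - p i) := by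
  simp only [relExt_vNC1, ← Finset.sum_sub_distrib, sub_sub_sub_cancel_left,
    sub_prod_insert_inter p hx, mem_closedNbhd_comm G (v := x), Finset.sum_ite_mem,
    Finset.univ_inter, Finset.mul_sum]

lemma shapley_relExt_vNC1 (p : α → ℝ) (x : α) :
    shapley (relExt p (vNC1 G)) x
      = 1 / ((Fintype.card α).factorial : ℝ) * ∑ σ : Fin (Fintype.card α) ≃ α,
          p x * ∑ w ∈ closedNbhd G x, ∏ i ∈ precedingSet σ x ∩ closedNbhd G w, (1 - p i) := by
  unfold shapley
  congr 1
  refine Finset.sum_congr rfl fun σ _ => relExt_vNC1_insert_sub G p ?_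
  simp [precedingSet]

lemma exists_walk_length_le_one_of_mem_closedNbhd {v y : α} (h : y ∈ closedNbhd G v) :
    ∃ q : G.Walk v y, q.length ≤ 1 := by
  rcases (mem_closedNbhd G).1 h with rfl | hadj
  exacts [⟨.nil, by simp⟩, ⟨hadj.toWalk, by simp⟩]

lemma dist_le_two_of_mem_closedNbhd {x w j : α} (hw : w ∈ closedNbhd G x)
    (hj : j ∈ closedNbhd G w) : G.dist x j ≤ 2 := by
  obtain ⟨a, ha⟩ := exists_walk_length_le_one_of_mem_closedNbhd G hw
  obtain ⟨b, hb⟩ := exists_walk_length_le_one_of_mem_closedNbhd G hj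
  calc G.dist x j ≤ (a.append b).length := G.dist_le _
    _ ≤ 2 := by rw [SimpleGraph.Walk.length_append]; omega

lemma exists_mem_closedNbhd_of_dist_le_two {x j : α} (hr : G.Reachable x j)
    (h : G.dist x j ≤ 2) : ∃ w ∈ closedNbhd G x, j ∈ closedNbhd G w := by
  obtain ⟨q, hq⟩ := hr.exists_walk_length_eq_dist
  rw [← hq] at h
  simp only [mem_closedNbhd]
  match q, h with
  | .nil, _ => exact ⟨x, Or.inl rfl, Or.inl rfl⟩
  | .cons hxj .nil, _ => exact ⟨x, Or.inl rfl, Or.inr hxj⟩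
  | .cons hxw (.cons hwj .nil), _ => exact ⟨_, Or.inr hxw, Or.inr hwj⟩
  | .cons _ (.cons _ (.cons _ _)), h => simp at h

lemma exists_precedingSet_eq_singleton {x j : α} (hjx : j ≠ x) :
    ∃ σ : Fin (Fintype.card α) ≃ α, precedingSet σ x = {j} := by
  have hn : 1 < Fintype.card α := Fintype.one_lt_card_iff.2 ⟨j, x, hjx⟩
  obtain ⟨σ, h0, h1⟩ := exists_equiv_apply_eq_apply_eq (Fintype.equivFin α).symm
    (i := ⟨0, by omega⟩) (k := ⟨1, hn⟩) (by simp) hjx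
  refine ⟨σ, Finset.ext fun y => ?_⟩
  rw [precedingSet, Finset.mem_filter_univ, Finset.mem_singleton, ← h1, σ.symm_apply_apply,
    Fin.lt_def, Nat.lt_one_iff, ← h0, ← σ.symm_apply_eq, Fin.ext_iff]

/-- `-∂ Sh[v̄_{NC1}](x) / ∂ p_j`, which does not involve `p j`. -/
def nc1Sensitivity (p : α → ℝ) (x j : α) : ℝ :=
  1 / ((Fintype.card α).factorial : ℝ) * ∑ σ : Fin (Fintype.card α) ≃ α,
    p x * ∑ w ∈ closedNbhd G x,
      if j ∈ precedingSet σ x ∩ closedNbhd G w then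
        ∏ i ∈ (precedingSet σ x ∩ closedNbhd G w).erase j, (1 - p i)
      else 0

lemma shapley_relExt_vNC1_sub {p q : α → ℝ} {x j : α} (hxj : x ≠ j) (hq : ∀ i ≠ j, q i = p i) :
    shapley (relExt q (vNC1 G)) x - shapley (relExt p (vNC1 G)) x
      = (p j - q j) * nc1Sensitivity G p x j := by
  have hprod := prod_sub_prod_of_forall_ne_eq (f := fun i => 1 - q i) (g := fun i => 1 - p i)
    fun i hi => by rw [hq i hi]
  simp only [shapley_relExt_vNC1, nc1Sensitivity, hq x hxj, ← mul_sub, ← Finset.sum_sub_distrib,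
    hprod, sub_sub_sub_cancel_left, Finset.mul_sum]
  exact Finset.sum_congr rfl fun _ _ => Finset.sum_congr rfl fun _ _ => by ring

lemma nc1Sensitivity_pos (p : α → ℝ) {x j w : α} (hjx : j ≠ x) (hpx : 0 < p x)
    (hp : ∀ i ≠ j, p i ≤ 1) (hw : w ∈ closedNbhd G x) (hjw : j ∈ closedNbhd G w) :
    0 < nc1Sensitivity G p x j := by
  obtain ⟨σ₀, hσ₀⟩ := exists_precedingSet_eq_singleton hjx
  have hterm : ∀ (σ : Fin (Fintype.card α) ≃ α) w, 0 ≤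
      if j ∈ precedingSet σ x ∩ closedNbhd G w then
        ∏ i ∈ (precedingSet σ x ∩ closedNbhd G w).erase j, (1 - p i)
      else 0 := by
    intro σ w
    split_ifs
    · exact Finset.prod_nonneg fun i hi => sub_nonneg.2 (hp i (Finset.ne_of_mem_erase hi))
    · exact le_rfl
  refine mul_pos (by positivity) (Finset.sum_pos'
    (fun σ _ => mul_nonneg hpx.le (Finset.sum_nonneg fun w _ => hterm σ w))
    ⟨σ₀, Finset.mem_univ _, mul_pos hpx (Finset.sum_pos' (fun w _ => hterm σ₀ w) ⟨w, hw, ?_⟩)⟩)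
  simp [hσ₀, Finset.singleton_inter_of_mem hjw]

lemma nc1Sensitivity_eq_zero (p : α → ℝ) {x j : α} (h : 2 < G.dist x j) :
    nc1Sensitivity G p x j = 0 := by
  refine mul_eq_zero_of_right _ (Finset.sum_eq_zero fun σ _ => mul_eq_zero_of_right _
    (Finset.sum_eq_zero fun w hw => if_neg fun hj => ?_))
  exact (dist_le_two_of_mem_closedNbhd G hw (Finset.mem_inter.1 hj).2).not_gt h

end NetworkCentrality

theorem stmt_7_general {α : Type*} [Fintype α] [DecidableEq α] (G : SimpleGraph α)
    (x j : α) (hjx : j ≠ x)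
    (p : α → ℝ) :
    ((G.dist x j = 1 ∨ G.dist x j = 2) → (∀ i, i ≠ j → p i ∈ Set.Ioc (0 : ℝ) 1) →
        StrictAntiOn (fun t => shapley (relExt (Function.update p j t) (vNC1 G)) x)
          (Set.Icc 0 1)) ∧
      (2 < G.dist x j → ∀ t ∈ Set.Icc (0 : ℝ) 1, ∀ s ∈ Set.Icc (0 : ℝ) 1,
        shapley (relExt (Function.update p j t) (vNC1 G)) x =
          shapley (relExt (Function.update p j s) (vNC1 G)) x) := by
  have hupdate : ∀ t, shapley (relExt (Function.update p j t) (vNC1 G)) x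
      = shapley (relExt p (vNC1 G)) x + (p j - t) * nc1Sensitivity G p x j := by
    intro t
    have h := shapley_relExt_vNC1_sub G hjx.symm fun i hi => Function.update_of_ne hi t p
    rw [Function.update_self] at h
    linarith
  refine ⟨fun hdist hp => ?_, fun hdist t _ s _ => ?_⟩
  · have hreach : G.Reachable x j := .of_dist_ne_zero (by omega)
    obtain ⟨w, hw, hjw⟩ := exists_mem_closedNbhd_of_dist_le_two G hreach (by omega)
    have hpos := nc1Sensitivity_pos G p hjx (hp x hjx.symm).1 (fun i hi => (hp i hi).2) hw hjw
    intro a _ b _ hab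
    simp only [hupdate]
    nlinarith
  · simp only [hupdate, nc1Sensitivity_eq_zero G p hdist, mul_zero]

theorem stmt_7 {α : Type*} [Fintype α] [DecidableEq α] (G : SimpleGraph α)
    (x j : α) (hjx : j ≠ x)
    (p : α → ℝ) (hp : ∀ i, p i ∈ Set.Icc (0 : ℝ) 1) :
    ((G.dist x j = 1 ∨ G.dist x j = 2) → (∀ i, i ≠ j → p i ∈ Set.Ioc (0 : ℝ) 1) →
        StrictAntiOn (fun t => shapley (relExt (Function.update p j t) (vNC1 G)) x)
          (Set.Icc 0 1)) ∧
      (2 < G.dist x j → ∀ t ∈ Set.Icc (0 : ℝ) 1, ∀ s ∈ Set.Icc (0 : ℝ) 1,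
        shapley (relExt (Function.update p j t) (vNC1 G)) x =
          shapley (relExt (Function.update p j s) (vNC1 G)) x) :=
  stmt_7_general G x j hjx p

end
end

section
/- In a credit-attribution setting with reliabilities p : N → [0,1], let x ∈ N and T ⊆ N∖{x}. Define p' : N → [0,1] by p'_j = 0 for j ∈ T and p'_j = p_j otherwise. Then Sh[v̄_{FC}](x) evaluated at reliabilities p' is greater than or equal to Sh[v̄_{FC}](x) evaluated at reliabilities p. In other words, no removal attack can decrease the Shapley value of a given player in the full credit attribution game. -/
open Finset

attribute [local instance] Classical.propDecidable

noncomputable section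

/-- `Pap x`: the papers having `x` among their authors. -/
def Pap {α β : Type*} [Fintype β] (Auth : β → Finset α) (x : α) : Finset β :=
  Finset.univ.filter fun k => x ∈ Auth k

/-- The full credit game. -/
def vFC {α β : Type*} [Fintype β] (Auth : β → Finset α) (w : β → ℝ) (S : Finset α) : ℝ :=
  ∑ k ∈ Finset.univ.filter (fun k => (Auth k ∩ S).Nonempty), w k

/-- The full obligation game. -/
def vFO {α β : Type*} [Fintype β] (Auth : β → Finset α) (w : β → ℝ) (S : Finset α) : ℝ :=
  ∑ k ∈ Finset.univ.filter (fun k => Auth k ⊆ S), w k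

/-!
Paper `k` contributes to the reliability extension of the full credit game `w k` times the
probability `1 - ∏ i ∈ S ∩ Auth k, (1 - p i)` that some author of `k` in `S` is reliable. So the
marginal contribution of `x ∉ S` is `∑ k ∋ x, w k * p x * ∏ i ∈ S ∩ Auth k, (1 - p i)`, which can
only grow when the reliabilities of players other than `x` are lowered; the Shapley value, an
average of such marginal contributions, grows with it.
-/

section

variable {α β : Type*}

theorem relExt_ite_disjoint (p : α → ℝ) (A S : Finset α) :
    relExt p (fun T => if Disjoint A T then 1 else 0) S = ∏ i ∈ S ∩ A, (1 - p i) := by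
  -- Expand `∏ i ∈ S, (q i + (1 - p i))`, where `q` kills the players of `A`.
  have expand := Finset.prod_add (fun i => if i ∉ A then p i else 0) (fun i => 1 - p i) S
  simp only [Finset.prod_ite_zero] at expand
  rw [← Finset.filter_mem_eq_inter, Finset.prod_filter]
  calc relExt p (fun T => if Disjoint A T then 1 else 0) S
      = ∏ i ∈ S, ((if i ∉ A then p i else 0) + (1 - p i)) := by
        rw [expand, relExt]
        refine Finset.sum_congr rfl fun T _ => ?_
        simp only [prodPi, Finset.disjoint_right]
        split_ifs <;> ring
    _ = ∏ i ∈ S, if i ∈ A then 1 - p i else 1 := by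
        refine Finset.prod_congr rfl fun i _ => ?_
        split_ifs <;> ring

theorem relExt_const_one (p : α → ℝ) (S : Finset α) : relExt p (fun _ => 1) S = 1 := by
  simpa using relExt_ite_disjoint p ∅ S

theorem vFC_eq_sum_mul_ite [Fintype β] (Auth : β → Finset α) (w : β → ℝ) (T : Finset α) :
    vFC Auth w T = ∑ k, w k * (1 - if Disjoint (Auth k) T then 1 else 0) := by
  rw [vFC, Finset.sum_filter]
  refine Finset.sum_congr rfl fun k _ => ?_
  simp only [← Finset.not_disjoint_iff_nonempty_inter]
  split_ifs <;> ring

theorem relExt_vFC [Fintype β] (Auth : β → Finset α) (w : β → ℝ) (p : α → ℝ) (S : Finset α) :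
    relExt p (vFC Auth w) S = ∑ k, w k * (1 - ∏ i ∈ S ∩ Auth k, (1 - p i)) := by
  calc relExt p (vFC Auth w) S
      = ∑ k, w k * (relExt p (fun _ => 1) S -
          relExt p (fun T => if Disjoint (Auth k) T then 1 else 0) S) := by
        simp only [relExt, vFC_eq_sum_mul_ite, Finset.sum_mul, Finset.mul_sum,
          ← Finset.sum_sub_distrib]
        rw [Finset.sum_comm]
        refine Finset.sum_congr rfl fun k _ => Finset.sum_congr rfl fun T _ => ?_
        ring
    _ = _ := by simp only [relExt_const_one, relExt_ite_disjoint]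

theorem relExt_vFC_insert_sub [Fintype β] (Auth : β → Finset α) (w : β → ℝ) (p : α → ℝ)
    {x : α} {S : Finset α} (hx : x ∉ S) :
    relExt p (vFC Auth w) (insert x S) - relExt p (vFC Auth w) S =
      ∑ k ∈ Pap Auth x, w k * p x * ∏ i ∈ S ∩ Auth k, (1 - p i) := by
  rw [relExt_vFC, relExt_vFC, ← Finset.sum_sub_distrib, Pap, Finset.sum_filter]
  refine Finset.sum_congr rfl fun k _ => ?_
  split_ifs with hxk
  · rw [Finset.insert_inter_of_mem hxk,
      Finset.prod_insert fun h => hx (Finset.mem_inter.1 h).1]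
    ring
  · rw [Finset.insert_inter_of_notMem hxk, sub_self]

theorem shapley_mono [Fintype α] {v v' : Finset α → ℝ} {x : α}
    (h : ∀ S, x ∉ S → v (insert x S) - v S ≤ v' (insert x S) - v' S) :
    shapley v x ≤ shapley v' x := by
  refine mul_le_mul_of_nonneg_left (Finset.sum_le_sum fun σ _ => h _ ?_) (by positivity)
  simp [precedingSet]

theorem relExt_vFC_insert_sub_le_of_le [Fintype β] (Auth : β → Finset α) {w : β → ℝ}
    (hw : ∀ k, 0 ≤ w k) {p p' : α → ℝ} (hp' : p' ≤ p) (hp1 : ∀ i, p i ≤ 1) {x : α}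
    (hpx : 0 ≤ p x) (hpx' : p' x = p x) {S : Finset α} (hx : x ∉ S) :
    relExt p (vFC Auth w) (insert x S) - relExt p (vFC Auth w) S ≤
      relExt p' (vFC Auth w) (insert x S) - relExt p' (vFC Auth w) S := by
  rw [relExt_vFC_insert_sub Auth w p hx, relExt_vFC_insert_sub Auth w p' hx, hpx']
  gcongr with k _ i
  · exact mul_nonneg (hw k) hpx
  · exact fun i _ => sub_nonneg.2 (hp1 i)
  · exact hp' i

end

theorem stmt_9_general {α β : Type*} [Fintype α] [Fintype β] [DecidableEq α]
    (Auth : β → Finset α)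
    (w : β → ℝ) (hw : ∀ k, 0 ≤ w k)
    (p : α → ℝ) (hp : ∀ i, p i ∈ Set.Icc (0 : ℝ) 1)
    (x : α) (T : Finset α) (hT : x ∉ T) :
    shapley (relExt p (vFC Auth w)) x ≤
      shapley (relExt (fun j => if j ∈ T then 0 else p j) (vFC Auth w)) x := by
  refine shapley_mono fun S hxS => relExt_vFC_insert_sub_le_of_le Auth hw (fun i => ?_)
    (fun i => (hp i).2) (hp x).1 (if_neg hT) hxS
  split_ifs
  exacts [(hp i).1, le_rfl]

theorem stmt_9 {α β : Type*} [Fintype α] [Fintype β] [DecidableEq α]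
    (Auth : β → Finset α) (hAuth : ∀ k, (Auth k).Nonempty)
    (w : β → ℝ) (hw : ∀ k, 0 ≤ w k)
    (p : α → ℝ) (hp : ∀ i, p i ∈ Set.Icc (0 : ℝ) 1)
    (x : α) (T : Finset α) (hT : x ∉ T) :
    shapley (relExt p (vFC Auth w)) x ≤
      shapley (relExt (fun j => if j ∈ T then 0 else p j) (vFC Auth w)) x :=
  stmt_9_general Auth w hw p hp x T hT

end
end

section
/- In a credit-attribution setting with reliabilities p : N → [0,1], let x ∈ N be an author such that every paper containing x has exactly two authors (x and one other author). Then Sh[v̄_{FO}](x) = p_x · Σ_{l ∈ CA(x)} C(x,l) · p_l/2, where CA(x) is the set of coauthors of x and C(x,l) = Σ_{k ∈ Pap_x ∩ Pap_l} w_k is the total weight of the papers jointly authored by x and l. -/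
open Finset

attribute [local instance] Classical.propDecidable

noncomputable section

/-- The set of coauthors of `x`. -/
def CA {α β : Type*} [Fintype α] [Fintype β] (Auth : β → Finset α) (x : α) : Finset α :=
  Finset.univ.filter fun l => l ≠ x ∧ ∃ k, x ∈ Auth k ∧ l ∈ Auth k

/-- `C(x,l)`: the total weight of papers jointly authored by `x` and `l`. -/
def jointContrib {α β : Type*} [Fintype β] (Auth : β → Finset α) (w : β → ℝ) (x l : α) : ℝ :=
  ∑ k ∈ Finset.univ.filter (fun k => x ∈ Auth k ∧ l ∈ Auth k), w k

/-!
Both the reliability extension and the Shapley value are linear in the game, and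
`vFO = ∑ₖ wₖ · u_{Auth k}` is a combination of unanimity games `u_T S = [T ⊆ S]`.
The reliability extension of `u_T` is `(∏_{i ∈ T} pᵢ) · u_T`: the reliability weights of the
sets between `T` and `S` add up to `∏_{i ∈ T} pᵢ · ∏_{i ∈ S \ T} (pᵢ + (1 - pᵢ))`.
The Shapley value of `u_T` gives each member of `T` the share `1 / #T`: a player's marginal
contribution is `1` exactly when it comes last among `T`, and swapping two members of `T`
exchanges the orderings in which each of them is last.
Papers of `x` with two authors thus contribute `wₖ pₓ pₗ / 2`, and grouping them by the
coauthor `l` gives the formula.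
-/

section

variable {α β : Type*}

def unanimity (T S : Finset α) : ℝ := if T ⊆ S then 1 else 0

lemma relExt_sum_mul {ι : Type*} (p : α → ℝ) (s : Finset ι) (c : ι → ℝ)
    (v : ι → Finset α → ℝ) (S : Finset α) :
    relExt p (fun S' => ∑ i ∈ s, c i * v i S') S = ∑ i ∈ s, c i * relExt p (v i) S := by
  simp only [relExt, sum_mul, mul_sum, mul_assoc]
  exact sum_comm

lemma relExt_unanimity (p : α → ℝ) (T S : Finset α) :
    relExt p (unanimity T) S = (∏ i ∈ T, p i) * unanimity T S := by
  unfold relExt unanimity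
  simp only [ite_mul, one_mul, zero_mul, mul_ite, mul_one, mul_zero]
  rw [← sum_filter]
  split_ifs with hTS
  · have hdisj : ∀ U ∈ (S \ T).powerset, Disjoint T U := fun U hU =>
      disjoint_of_subset_right (mem_powerset.mp hU) disjoint_sdiff
    have hinj : Set.InjOn (T ∪ ·) (S \ T).powerset :=
      fun U hU U' hU' (h : T ∪ U = T ∪ U') => by
        rw [← union_sdiff_cancel_left (hdisj U hU), h, union_sdiff_cancel_left (hdisj U' hU')]
    rw [← Icc_eq_filter_powerset, Icc_eq_image_powerset hTS, sum_image hinj]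
    calc ∑ U ∈ (S \ T).powerset, prodPi p (T ∪ U) S
        = ∑ U ∈ (S \ T).powerset,
            (∏ i ∈ T, p i) * ((∏ i ∈ U, p i) * ∏ i ∈ (S \ T) \ U, (1 - p i)) :=
          sum_congr rfl fun U hU => by
            rw [prodPi, prod_union (hdisj U hU), sdiff_sdiff_left, sup_eq_union, mul_assoc]
      _ = (∏ i ∈ T, p i) * ∏ i ∈ S \ T, (p i + (1 - p i)) := by rw [prod_add, mul_sum]
      _ = ∏ i ∈ T, p i := by simp
  · refine sum_eq_zero fun T' hT' => absurd ?_ hTS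
    obtain ⟨hT'S, hTT'⟩ := mem_filter.mp hT'
    exact hTT'.trans (mem_powerset.mp hT'S)

lemma vFO_eq_sum_unanimity [Fintype β] (Auth : β → Finset α) (w : β → ℝ) :
    vFO Auth w = fun S => ∑ k, w k * unanimity (Auth k) S := by
  ext S
  simp [vFO, unanimity, sum_filter]

lemma shapley_sum_mul [Fintype α] {ι : Type*} (s : Finset ι) (c : ι → ℝ)
    (v : ι → Finset α → ℝ) (x : α) :
    shapley (fun S => ∑ i ∈ s, c i * v i S) x = ∑ i ∈ s, c i * shapley (v i) x := by
  simp only [shapley, ← sum_sub_distrib, ← mul_sub, mul_sum]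
  rw [sum_comm]
  exact sum_congr rfl fun _ _ => sum_congr rfl fun _ _ => mul_left_comm _ _ _

lemma subset_insert_precedingSet_iff [Fintype α] (σ : Fin (Fintype.card α) ≃ α) (x : α)
    (T : Finset α) :
    T ⊆ insert x (precedingSet σ x) ↔ ∀ y ∈ T, σ.symm y ≤ σ.symm x := by
  refine forall₂_congr fun y _ => ?_
  simp [precedingSet, le_iff_eq_or_lt, σ.symm.injective.eq_iff]

lemma card_filter_isLast_mul_card [Fintype α] {T : Finset α} {x : α} (hx : x ∈ T) :
    #{σ : Fin (Fintype.card α) ≃ α | ∀ y ∈ T, σ.symm y ≤ σ.symm x} * #T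
      = (Fintype.card α).factorial := by
  set last := fun (y : α) (σ : Fin (Fintype.card α) ≃ α) =>
    ∀ z ∈ T, σ.symm z ≤ σ.symm y
  have hswap : ∀ y ∈ T, #{σ | last y σ} = #{σ | last x σ} := by
    intro y hy
    have hmem : ∀ z ∈ T, Equiv.swap x y z ∈ T := fun z hz => by
      rw [Equiv.swap_apply_def]; split_ifs <;> assumption
    refine card_nbij' (·.trans (Equiv.swap x y)) (·.trans (Equiv.swap x y)) ?_ ?_
      (fun σ _ => by ext; simp) (fun σ _ => by ext; simp)
    all_goals
      intro σ hσ
      simp only [coe_filter, mem_univ, true_and, Set.mem_ofPred_eq, last] at hσ ⊢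
      exact fun z hz => by simpa using hσ _ (hmem z hz)
  have hunique : ∀ σ, #{y ∈ T | last y σ} = 1 := by
    intro σ
    obtain ⟨y, hyT, hy⟩ := T.exists_max_image σ.symm ⟨x, hx⟩
    refine card_eq_one.mpr ⟨y, ?_⟩
    ext z
    simp only [mem_filter, mem_singleton]
    exact ⟨fun ⟨hzT, hz⟩ => σ.symm.injective ((hy z hzT).antisymm (hz y hyT)),
      fun h => h ▸ ⟨hyT, hy⟩⟩
  calc #{σ | last x σ} * #T = ∑ y ∈ T, #{σ | last y σ} := by
        rw [sum_congr rfl hswap, sum_const, smul_eq_mul, mul_comm]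
    _ = ∑ σ : Fin (Fintype.card α) ≃ α, #{y ∈ T | last y σ} :=
        sum_card_bipartiteAbove_eq_sum_card_bipartiteBelow _
    _ = (Fintype.card α).factorial := by
        simp [hunique, Fintype.card_equiv (Fintype.equivFin α).symm]

lemma shapley_unanimity [Fintype α] (T : Finset α) (x : α) :
    shapley (unanimity T) x = if x ∈ T then (#T : ℝ)⁻¹ else 0 := by
  split_ifs with hx
  · have hmarg : ∀ σ,
        unanimity T (insert x (precedingSet σ x)) - unanimity T (precedingSet σ x)
          = if ∀ y ∈ T, σ.symm y ≤ σ.symm x then 1 else 0 := fun σ => by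
      have hT_not_sub : ¬T ⊆ precedingSet σ x := fun h => by simpa [precedingSet] using h hx
      simp [unanimity, subset_insert_precedingSet_iff, hT_not_sub]
    have hT : (#T : ℝ) ≠ 0 := by exact_mod_cast (card_pos.mpr ⟨x, hx⟩).ne'
    have hfac : ((Fintype.card α).factorial : ℝ) ≠ 0 := by positivity
    rw [shapley, sum_congr rfl fun σ _ => hmarg σ, sum_boole]
    field_simp
    exact_mod_cast card_filter_isLast_mul_card hx
  · have hmarg : ∀ σ,
        unanimity T (insert x (precedingSet σ x)) = unanimity T (precedingSet σ x) :=
        fun σ => by simp only [unanimity, subset_insert_iff_of_notMem hx]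
    simp [shapley, hmarg]

theorem shapley_relExt_vFO [Fintype α] [Fintype β] (Auth : β → Finset α) (w : β → ℝ)
    (p : α → ℝ) (x : α) :
    shapley (relExt p (vFO Auth w)) x
      = ∑ k ∈ Pap Auth x, w k * (∏ i ∈ Auth k, p i) / #(Auth k) := by
  have hrel : relExt p (vFO Auth w)
      = fun S => ∑ k, (w k * ∏ i ∈ Auth k, p i) * unanimity (Auth k) S := by
    ext S
    simp only [vFO_eq_sum_unanimity, relExt_sum_mul, relExt_unanimity, mul_assoc]
  simp only [hrel, shapley_sum_mul, shapley_unanimity, Pap, sum_filter, mul_ite, mul_zero,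
    div_eq_mul_inv]

lemma sum_CA_jointContrib_mul [Fintype α] [Fintype β] (Auth : β → Finset α) (w : β → ℝ)
    (f : α → ℝ) (x : α) :
    ∑ l ∈ CA Auth x, jointContrib Auth w x l * f l
      = ∑ k ∈ Pap Auth x, w k * ∑ l ∈ (Auth k).erase x, f l := by
  simp only [jointContrib, sum_mul, mul_sum]
  exact sum_comm' fun l k => by
    simp only [CA, Pap, mem_filter, mem_univ, true_and, mem_erase]
    grind

end

theorem stmt_14_general {α β : Type*} [Fintype α] [Fintype β]
    (Auth : β → Finset α)
    (w : β → ℝ)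
    (p : α → ℝ)
    (x : α) (h2 : ∀ k, x ∈ Auth k → (Auth k).card = 2) :
    shapley (relExt p (vFO Auth w)) x =
      p x * ∑ l ∈ CA Auth x, jointContrib Auth w x l * p l / 2 := by
  have hpair : ∀ k ∈ Pap Auth x, w k * (∏ i ∈ Auth k, p i) / #(Auth k)
      = p x * (w k * ∑ l ∈ (Auth k).erase x, p l / 2) := fun k hk => by
    have hx : x ∈ Auth k := (mem_filter.mp hk).2
    obtain ⟨l, hl⟩ : ∃ l, (Auth k).erase x = {l} :=
      card_eq_one.mp (by rw [card_erase_of_mem hx, h2 k hx])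
    rw [← mul_prod_erase _ _ hx, hl, h2 k hx, prod_singleton, sum_singleton]
    push_cast
    ring
  calc shapley (relExt p (vFO Auth w)) x
      = ∑ k ∈ Pap Auth x, w k * (∏ i ∈ Auth k, p i) / #(Auth k) :=
        shapley_relExt_vFO Auth w p x
    _ = p x * ∑ k ∈ Pap Auth x, w k * ∑ l ∈ (Auth k).erase x, p l / 2 := by
        rw [mul_sum]; exact sum_congr rfl hpair
    _ = p x * ∑ l ∈ CA Auth x, jointContrib Auth w x l * p l / 2 := by
        simp only [mul_div_assoc, sum_CA_jointContrib_mul]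

theorem stmt_14 {α β : Type*} [Fintype α] [Fintype β] [DecidableEq α]
    (Auth : β → Finset α) (hAuth : ∀ k, (Auth k).Nonempty)
    (w : β → ℝ) (hw : ∀ k, 0 ≤ w k)
    (p : α → ℝ) (hp : ∀ i, p i ∈ Set.Icc (0 : ℝ) 1)
    (x : α) (h2 : ∀ k, x ∈ Auth k → (Auth k).card = 2) :
    shapley (relExt p (vFO Auth w)) x =
      p x * ∑ l ∈ CA Auth x, jointContrib Auth w x l * p l / 2 :=
  stmt_14_general Auth w p x h2

end
end

section
/- Let n ≥ 3 and let S_n be the star graph on vertex set {1,2,…,n} centered at vertex 2 (its edges are {2, j} for all j ≠ 2). Regard Sh[v̄_{NC1}](1) as a (polynomial) function of the reliability vector p, and let p ∈ (0,1]^n. Then ∂Sh[v̄_{NC1}](1)/∂p_2 ≤ −p_1/2, while for every j ∉ {1,2}, ∂Sh[v̄_{NC1}](1)/∂p_j > −p_1/2. -/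
open Finset

attribute [local instance] Classical.propDecidable

noncomputable section

/-- The star graph on `Fin n` centered at `c`. -/
def starGraph (n : ℕ) (c : Fin n) : SimpleGraph (Fin n) :=
  SimpleGraph.fromRel (fun i _ => i = c)
/-!
If `x` is a leaf of a star with centre `c`, its marginal contribution to a coalition `T` in
`v_{NC1}` is `[c ∉ T] + [T = ∅]`. Averaging over the random surviving subcoalition of `S` gives
`v̄(S ∪ {x}) - v̄(S) = p_x · ((1 - p_c)^[c ∈ S] + ∏_{i ∈ S} (1 - p_i))`, which is affine in each
`p_k`. Hence `∂Sh[v̄](x)/∂p_k` is `-p_x` times the average over orderings of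
`[k precedes x] · ([k = c] + ∏_{i precedes x, i ≠ k} (1 - p_i))`. As `k` precedes `x` in exactly
half of the orderings, this is at most `-p_x / 2` for `k = c`, while for any other `k` it exceeds
`-p_x / 2`, strictly because of the orderings in which both `c` and `k` precede `x`: there the
product is at most `1 - p_c < 1`.
-/

section ReliabilityExtension

variable {α : Type*} (p : α → ℝ)

lemma prodPi_insert_right {x : α} {T S : Finset α} (hxS : x ∉ S) (hxT : x ∉ T) :
    prodPi p T (insert x S) = (1 - p x) * prodPi p T S := by
  rw [prodPi, prodPi, insert_sdiff_of_notMem _ hxT,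
    prod_insert fun h => hxS (mem_sdiff.1 h).1]
  ring

lemma prodPi_insert_insert {x : α} {T S : Finset α} (hxS : x ∉ S) (hxT : x ∉ T) :
    prodPi p (insert x T) (insert x S) = p x * prodPi p T S := by
  rw [prodPi, prodPi, insert_sdiff_insert, sdiff_insert_of_notMem hxS, prod_insert hxT]
  ring

lemma relExt_congr {v w : Finset α → ℝ} {S : Finset α} (h : ∀ T ⊆ S, v T = w T) :
    relExt p v S = relExt p w S :=
  sum_congr rfl fun T hT => by rw [h T (mem_powerset.1 hT)]

lemma relExt_const (a : ℝ) (S : Finset α) : relExt p (fun _ => a) S = a := by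
  rw [relExt, ← mul_sum]
  simp [prodPi, ← prod_add]

lemma relExt_add (v w : Finset α → ℝ) (S : Finset α) :
    relExt p (fun T => v T + w T) S = relExt p v S + relExt p w S := by
  simp only [relExt, add_mul, sum_add_distrib]

lemma relExt_sub (v w : Finset α → ℝ) (S : Finset α) :
    relExt p (fun T => v T - w T) S = relExt p v S - relExt p w S := by
  simp only [relExt, sub_mul, sum_sub_distrib]

lemma relExt_insert (v : Finset α → ℝ) {x : α} {S : Finset α} (hx : x ∉ S) :
    relExt p v (insert x S)
      = (1 - p x) * relExt p v S + p x * relExt p (fun T => v (insert x T)) S := by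
  simp only [relExt, sum_powerset_insert hx, mul_sum]
  congr 1 <;> refine sum_congr rfl fun T hT => ?_
  · rw [prodPi_insert_right p hx (notMem_of_mem_powerset_of_notMem hT hx)]
    ring
  · rw [prodPi_insert_insert p hx (notMem_of_mem_powerset_of_notMem hT hx)]
    ring

lemma relExt_insert_sub_relExt (v : Finset α → ℝ) {x : α} {S : Finset α} (hx : x ∉ S) :
    relExt p v (insert x S) - relExt p v S
      = p x * relExt p (fun T => v (insert x T) - v T) S := by
  rw [relExt_insert p v hx, relExt_sub]
  ring

lemma relExt_ite_mem (c : α) (S : Finset α) :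
    relExt p (fun T => if c ∈ T then 0 else 1) S = if c ∈ S then 1 - p c else 1 := by
  have h_of_notMem : ∀ S : Finset α, c ∉ S → relExt p (fun T => if c ∈ T then 0 else 1) S = 1 :=
    fun S hc => (relExt_congr p fun T hT => if_neg fun h => hc (hT h)).trans (relExt_const p 1 S)
  by_cases hc : c ∈ S
  · rw [if_pos hc, ← insert_erase hc, relExt_insert p _ (notMem_erase c S),
      h_of_notMem _ (notMem_erase c S)]
    simp [relExt_const]
  · rw [if_neg hc, h_of_notMem S hc]

lemma relExt_ite_eq_empty (S : Finset α) :
    relExt p (fun T => if T = ∅ then 1 else 0) S = ∏ i ∈ S, (1 - p i) := by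
  rw [relExt, sum_eq_single_of_mem ∅ (empty_mem_powerset S)]
  · simp [prodPi]
  · intro T _ hT
    simp [hT]

end ReliabilityExtension

section StarMarginal

variable {α : Type*} (p : α → ℝ)

def starMarginal (c : α) (S : Finset α) : ℝ :=
  (if c ∈ S then 1 - p c else 1) + ∏ i ∈ S, (1 - p i)

lemma hasDerivAt_starMarginal_update (c k : α) (S : Finset α) :
    HasDerivAt (fun t => starMarginal (Function.update p k t) c S)
      (-if k ∈ S then (if k = c then 1 else 0) + ∏ i ∈ S.erase k, (1 - p i) else 0) (p k) := by
  have hcoord : ∀ i, HasDerivAt (fun t => 1 - Function.update p k t i)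
      (-(Pi.single k 1 : α → ℝ) i) (p k) :=
    fun i => (hasDerivAt_pi.1 (hasDerivAt_update p k (p k)) i).const_sub 1
  have hcentre : HasDerivAt (fun t => if c ∈ S then 1 - Function.update p k t c else 1)
      (if c ∈ S then -(Pi.single k 1 : α → ℝ) c else 0) (p k) := by
    split_ifs
    · exact hcoord c
    · exact hasDerivAt_const _ _
  refine (hcentre.add (HasDerivAt.fun_finsetProd (u := S) fun i _ => hcoord i)).congr_deriv ?_
  simp only [Pi.single_apply, Function.update_eq_self, smul_eq_mul, mul_neg, mul_ite, mul_one,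
    mul_zero, sum_neg_distrib, sum_ite_eq']
  by_cases hkc : k = c
  · subst hkc
    split_ifs <;> ring
  · simp [hkc, Ne.symm hkc]

variable {p}

lemma prod_one_sub_le_one (hp : ∀ i, p i ∈ Set.Icc 0 1) (S : Finset α) :
    ∏ i ∈ S, (1 - p i) ≤ 1 :=
  prod_le_one (fun i _ => sub_nonneg.2 (hp i).2) fun i _ => sub_le_self _ (hp i).1

lemma prod_one_sub_le_one_sub_of_mem (hp : ∀ i, p i ∈ Set.Icc 0 1) {S : Finset α} {c : α}
    (hc : c ∈ S) : ∏ i ∈ S, (1 - p i) ≤ 1 - p c := by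
  rw [← mul_prod_erase S _ hc]
  exact mul_le_of_le_one_right (sub_nonneg.2 (hp c).2) (prod_one_sub_le_one hp _)

end StarMarginal

section Star

variable {α : Type*} [Fintype α] {G : SimpleGraph α} {c : α}

lemma union_extBoundary_of_star (hG : ∀ a b, G.Adj a b ↔ a ≠ b ∧ (a = c ∨ b = c))
    {S : Finset α} (hS : S.Nonempty) :
    S ∪ extBoundary G S = if c ∈ S then univ else insert c S := by
  obtain ⟨s, hs⟩ := hS
  ext y
  simp only [extBoundary, hG, mem_union, mem_filter, mem_univ, true_and]
  split_ifs with hc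
  · simp only [mem_univ, iff_true]
    by_cases hy : y ∈ S
    · exact Or.inl hy
    · exact Or.inr ⟨hy, c, hc, fun h => hy (h ▸ hc), Or.inl rfl⟩
  · simp only [mem_insert]
    grind

lemma vNC1_insert_sub_vNC1_of_star (hG : ∀ a b, G.Adj a b ↔ a ≠ b ∧ (a = c ∨ b = c))
    {x : α} (hxc : x ≠ c) {T : Finset α} (hx : x ∉ T) :
    vNC1 G (insert x T) - vNC1 G T = (if c ∈ T then 0 else 1) + (if T = ∅ then 1 else 0) := by
  rw [vNC1, vNC1, union_extBoundary_of_star hG (insert_nonempty x T)]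
  rcases T.eq_empty_or_nonempty with rfl | hT
  · norm_num [hxc.symm, extBoundary]
  · rw [union_extBoundary_of_star hG hT]
    by_cases hc : c ∈ T
    · simp [hc, hT.ne_empty]
    · have hcx : c ∉ insert x T := by simp [hc, hxc.symm]
      simp [hc, hT.ne_empty, card_insert_of_notMem, hx, hcx]

lemma relExt_vNC1_insert_sub_of_star (p : α → ℝ)
    (hG : ∀ a b, G.Adj a b ↔ a ≠ b ∧ (a = c ∨ b = c)) {x : α} (hxc : x ≠ c) {S : Finset α}
    (hx : x ∉ S) :
    relExt p (vNC1 G) (insert x S) - relExt p (vNC1 G) S = p x * starMarginal p c S := by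
  rw [relExt_insert_sub_relExt p _ hx,
    relExt_congr p fun T hT => vNC1_insert_sub_vNC1_of_star hG hxc fun h => hx (hT h),
    relExt_add, relExt_ite_mem, relExt_ite_eq_empty, starMarginal]

end Star

section PrecedingSet

variable {α : Type*} [Fintype α]

lemma mem_precedingSet {σ : Fin (Fintype.card α) ≃ α} {x y : α} :
    y ∈ precedingSet σ x ↔ σ.symm y < σ.symm x := by
  simp [precedingSet]

lemma self_notMem_precedingSet (σ : Fin (Fintype.card α) ≃ α) (x : α) :
    x ∉ precedingSet σ x := by
  simp [mem_precedingSet]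

lemma mem_precedingSet_trans_swap (σ : Fin (Fintype.card α) ≃ α) {k x : α} (hkx : k ≠ x) :
    k ∈ precedingSet (σ.trans (Equiv.swap x k)) x ↔ k ∉ precedingSet σ x := by
  have hne : σ.symm x ≠ σ.symm k := fun h => hkx (σ.symm.injective h).symm
  simp only [mem_precedingSet, Equiv.symm_trans_apply, Equiv.symm_swap, Equiv.swap_apply_left,
    Equiv.swap_apply_right, not_lt]
  exact ⟨le_of_lt, fun h => lt_of_le_of_ne h hne⟩

lemma two_mul_card_filter_mem_precedingSet {k x : α} (hkx : k ≠ x) :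
    2 * #{σ : Fin (Fintype.card α) ≃ α | k ∈ precedingSet σ x} = (Fintype.card α).factorial := by
  have hswap : ∀ σ : Fin (Fintype.card α) ≃ α,
      (σ.trans (Equiv.swap x k)).trans (Equiv.swap x k) = σ := fun σ => by ext; simp
  have hhalf : #{σ : Fin (Fintype.card α) ≃ α | k ∈ precedingSet σ x}
      = #{σ : Fin (Fintype.card α) ≃ α | k ∉ precedingSet σ x} :=
    card_nbij' (·.trans (Equiv.swap x k)) (·.trans (Equiv.swap x k))
      (fun σ hσ => by simpa [mem_precedingSet_trans_swap σ hkx] using hσ)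
      (fun σ hσ => by simpa [mem_precedingSet_trans_swap _ hkx, hswap] using hσ)
      (fun σ _ => hswap σ) (fun σ _ => hswap σ)
  rw [two_mul]
  nth_rw 2 [hhalf]
  rw [card_filter_add_card_filter_not, card_univ, Fintype.card_equiv (Fintype.equivFin α).symm,
    Fintype.card_fin]

lemma shapley_average_ite_mem_precedingSet {k x : α} (hkx : k ≠ x) (a : ℝ) :
    1 / ((Fintype.card α).factorial : ℝ) *
      ∑ σ : Fin (Fintype.card α) ≃ α, (if k ∈ precedingSet σ x then a else 0) = a / 2 := by
  have hcard := two_mul_card_filter_mem_precedingSet hkx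
  have hpos : (#{σ : Fin (Fintype.card α) ≃ α | k ∈ precedingSet σ x} : ℝ) ≠ 0 := by
    have := (Fintype.card α).factorial_pos
    norm_cast
    omega
  rw [← sum_filter, sum_const, nsmul_eq_mul, ← hcard]
  push_cast
  field_simp

lemma exists_forall_mem_precedingSet (x : α) :
    ∃ σ : Fin (Fintype.card α) ≃ α, ∀ y ≠ x, y ∈ precedingSet σ x := by
  set e := (Fintype.equivFin α).symm
  have hpos := Fintype.card_pos_iff.2 ⟨x⟩
  set last : Fin (Fintype.card α) := ⟨Fintype.card α - 1, by omega⟩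
  refine ⟨e.trans (Equiv.swap (e last) x), fun y hy => ?_⟩
  have hne : e.symm (Equiv.swap (e last) x y) ≠ last := by
    rw [Ne, Equiv.symm_apply_eq, Equiv.swap_apply_eq_iff, Equiv.swap_apply_left]
    exact hy
  rw [mem_precedingSet, Equiv.symm_trans_apply, Equiv.symm_trans_apply, Equiv.symm_swap,
    Equiv.swap_apply_right, Equiv.symm_apply_apply, Fin.lt_def]
  have := (e.symm (Equiv.swap (e last) x y)).isLt
  have := Fin.val_ne_of_ne hne
  simp only [last] at this ⊢
  omega

end PrecedingSet

section StarShapley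

variable {α : Type*} [Fintype α] {G : SimpleGraph α} {c : α} (p : α → ℝ)

lemma shapley_relExt_vNC1_of_star (hG : ∀ a b, G.Adj a b ↔ a ≠ b ∧ (a = c ∨ b = c))
    {x : α} (hxc : x ≠ c) :
    shapley (relExt p (vNC1 G)) x
      = 1 / ((Fintype.card α).factorial : ℝ) * ∑ σ : Fin (Fintype.card α) ≃ α,
          p x * starMarginal p c (precedingSet σ x) :=
  congrArg _ <| sum_congr rfl fun σ _ =>
    relExt_vNC1_insert_sub_of_star p hG hxc (self_notMem_precedingSet σ x)

lemma hasDerivAt_shapley_relExt_vNC1_update_of_star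
    (hG : ∀ a b, G.Adj a b ↔ a ≠ b ∧ (a = c ∨ b = c)) {x k : α} (hxc : x ≠ c) (hkx : k ≠ x) :
    HasDerivAt (fun t => shapley (relExt (Function.update p k t) (vNC1 G)) x)
      (-(1 / ((Fintype.card α).factorial : ℝ) * ∑ σ : Fin (Fintype.card α) ≃ α,
          if k ∈ precedingSet σ x then
            p x * ((if k = c then 1 else 0) + ∏ i ∈ (precedingSet σ x).erase k, (1 - p i))
          else 0)) (p k) := by
  have hfun : (fun t => shapley (relExt (Function.update p k t) (vNC1 G)) x)
      = fun t => 1 / ((Fintype.card α).factorial : ℝ) * ∑ σ : Fin (Fintype.card α) ≃ α,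
          p x * starMarginal (Function.update p k t) c (precedingSet σ x) := by
    funext t
    rw [shapley_relExt_vNC1_of_star _ hG hxc, Function.update_of_ne hkx.symm]
  rw [hfun]
  refine (HasDerivAt.fun_sum fun σ _ =>
    (hasDerivAt_starMarginal_update p c k _).const_mul (p x)).const_mul _ |>.congr_deriv ?_
  simp only [mul_neg, mul_ite, mul_zero, sum_neg_distrib]

lemma deriv_shapley_relExt_vNC1_update_centre_le
    (hG : ∀ a b, G.Adj a b ↔ a ≠ b ∧ (a = c ∨ b = c)) {x : α} (hxc : x ≠ c)
    (hp : ∀ i, p i ∈ Set.Icc 0 1) :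
    deriv (fun t => shapley (relExt (Function.update p c t) (vNC1 G)) x) (p c) ≤ -p x / 2 := by
  rw [(hasDerivAt_shapley_relExt_vNC1_update_of_star p hG hxc hxc.symm).deriv, neg_div,
    neg_le_neg_iff, ← shapley_average_ite_mem_precedingSet hxc.symm (p x)]
  simp only [↓reduceIte]
  gcongr with σ
  split_ifs
  · have : 0 ≤ ∏ i ∈ (precedingSet σ x).erase c, (1 - p i) :=
      prod_nonneg fun i _ => sub_nonneg.2 (hp i).2
    nlinarith [(hp x).1]
  · exact le_rfl

lemma neg_half_lt_deriv_shapley_relExt_vNC1_update_of_star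
    (hG : ∀ a b, G.Adj a b ↔ a ≠ b ∧ (a = c ∨ b = c)) {x k : α} (hxc : x ≠ c) (hkx : k ≠ x)
    (hkc : k ≠ c) (hp : ∀ i, p i ∈ Set.Icc 0 1) (hx : 0 < p x) (hc : 0 < p c) :
    -p x / 2 < deriv (fun t => shapley (relExt (Function.update p k t) (vNC1 G)) x) (p k) := by
  rw [(hasDerivAt_shapley_relExt_vNC1_update_of_star p hG hxc hkx).deriv, neg_div,
    neg_lt_neg_iff, ← shapley_average_ite_mem_precedingSet hkx (p x)]
  simp only [if_neg hkc, zero_add]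
  obtain ⟨σ₀, hσ₀⟩ := exists_forall_mem_precedingSet x
  refine mul_lt_mul_of_pos_left (sum_lt_sum (fun σ _ => ?_) ⟨σ₀, mem_univ _, ?_⟩) (by positivity)
  · split_ifs
    · exact mul_le_of_le_one_right hx.le (prod_one_sub_le_one hp _)
    · exact le_rfl
  · have hcσ₀ : c ∈ (precedingSet σ₀ x).erase k := mem_erase.2 ⟨hkc.symm, hσ₀ c hxc.symm⟩
    rw [if_pos (hσ₀ k hkx), if_pos (hσ₀ k hkx)]
    refine mul_lt_of_lt_one_right hx ?_
    linarith [prod_one_sub_le_one_sub_of_mem hp hcσ₀]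

end StarShapley

lemma starGraph_adj {n : ℕ} {c : Fin n} (a b : Fin n) :
    (starGraph n c).Adj a b ↔ a ≠ b ∧ (a = c ∨ b = c) :=
  SimpleGraph.fromRel_adj _ a b

theorem stmt_17 (n : ℕ) (hn : 3 ≤ n)
    (p : Fin n → ℝ) (hp : ∀ i, p i ∈ Set.Ioc (0 : ℝ) 1) :
    deriv (fun t => shapley
        (relExt (Function.update p ⟨1, by omega⟩ t) (vNC1 (starGraph n ⟨1, by omega⟩)))
        ⟨0, by omega⟩) (p ⟨1, by omega⟩) ≤ -(p ⟨0, by omega⟩) / 2 ∧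
      ∀ j : Fin n, j ≠ ⟨0, by omega⟩ → j ≠ ⟨1, by omega⟩ →
        -(p ⟨0, by omega⟩) / 2 <
          deriv (fun t => shapley
            (relExt (Function.update p j t) (vNC1 (starGraph n ⟨1, by omega⟩)))
            ⟨0, by omega⟩) (p j) := by
  have h01 : (⟨0, by omega⟩ : Fin n) ≠ ⟨1, by omega⟩ := by simp
  have hp' : ∀ i, p i ∈ Set.Icc 0 1 := fun i => Set.Ioc_subset_Icc_self (hp i)
  -- `convert` identifies the `DecidableEq (Fin n)` instance of `Function.update` here with the
  -- classical one the lemmas above are stated with.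
  refine ⟨?_, fun j hj0 hj1 => ?_⟩
  · convert deriv_shapley_relExt_vNC1_update_centre_le p starGraph_adj h01 hp'
  · convert neg_half_lt_deriv_shapley_relExt_vNC1_update_of_star p starGraph_adj h01 hj0 hj1 hp'
      (hp _).1 (hp _).1

end
end
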